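/- arXiv:1412.0360 — 2 statements merged into one kernel-verified Lean document; each statement's English description precedes it below -/
import Mathlib

section
/- Let d ≥ 3, r > 1, and W : ℝ^d → ℝ be locally bounded and measurable. Let D_n = {x ∈ ℝ^d : r^{n-1} ≤ |x| < r^n}. If there exists a constant c ∈ ℝ such that inf_{x ∈ D_n} W(x) ≥ n(d-2) log r − c holds for infinitely many n ∈ ℕ, then ∫_1^∞ (∫_{S^{d-1}} e^{−W(sθ)} dθ)^{−1} s^{−d+1} ds = ∞, where S^{d-1} is the unit sphere in ℝ^d and dθ is its surface measure. -/
open MeasureTheory Real Set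
open scoped ENNReal

private def auxSeqF (g : ℕ → ℕ) : ℕ → ℕ
  | 0 => g 1
  | k + 1 => g (auxSeqF g k + 1)

private lemma aux_seq {Q : ℕ → Prop} (h : ∀ N : ℕ, ∃ n, N ≤ n ∧ Q n) :
    ∃ f : ℕ → ℕ, StrictMono f ∧ ∀ k, 1 ≤ f k ∧ Q (f k) := by
  choose g hg1 hg2 using h
  refine ⟨auxSeqF g, ?_, ?_⟩
  · apply strictMono_nat_of_lt_succ
    intro k
    have h1 := hg1 (auxSeqF g k + 1)
    simp only [auxSeqF]
    omega
  · intro k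
    induction k with
    | zero => exact ⟨hg1 1, hg2 1⟩
    | succ k ih =>
        have h1 := hg1 (auxSeqF g k + 1)
        have h2 := hg2 (auxSeqF g k + 1)
        exact ⟨by simp only [auxSeqF]; omega, h2⟩

/-- Ichihara-type criterion lower bound: if on infinitely many annuli `D n` the
environment `W` satisfies `W x ≥ n (d-2) log r - c`, then the recurrence integral
diverges. -/
theorem stmt_0 (d : ℕ) (hd : 3 ≤ d) (r : ℝ) (hr : 1 < r)
    (W : EuclideanSpace ℝ (Fin d) → ℝ)
    (hWmeas : Measurable W)
    (hWloc : ∀ R : ℝ, ∃ C : ℝ, ∀ x, ‖x‖ ≤ R → |W x| ≤ C)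
    (D : ℕ → Set (EuclideanSpace ℝ (Fin d)))
    (hD : ∀ n, D n = {x | r ^ ((n : ℝ) - 1) ≤ ‖x‖ ∧ ‖x‖ < r ^ (n : ℝ)})
    (c : ℝ)
    (hinf : ∀ N : ℕ, ∃ n ≥ N, ∀ x ∈ D n, (n : ℝ) * ((d : ℝ) - 2) * Real.log r - c ≤ W x) :
    ∫⁻ s in Ioi (1 : ℝ),
      ENNReal.ofReal
        ((∫ θ : Metric.sphere (0 : EuclideanSpace ℝ (Fin d)) 1,
            Real.exp (-W (s • (θ : EuclideanSpace ℝ (Fin d))))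
              ∂(volume : Measure (EuclideanSpace ℝ (Fin d))).toSphere)⁻¹
          * s ^ (-(d : ℝ) + 1)) = ⊤ := by
  have hrpos : (0 : ℝ) < r := lt_trans one_pos hr
  set σ : Measure (Metric.sphere (0 : EuclideanSpace ℝ (Fin d)) 1) := (volume : Measure (EuclideanSpace ℝ (Fin d))).toSphere with hσ
  set σr : ℝ := (σ Set.univ).toReal with hσr
  haveI : Nonempty (Fin d) := ⟨⟨0, by omega⟩⟩
  have hσuniv : σ Set.univ = (d : ℝ≥0∞) * volume (Metric.ball (0 : EuclideanSpace ℝ (Fin d)) 1) := by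
    rw [hσ, Measure.toSphere_apply_univ]
    simp [finrank_euclideanSpace]
  have hσpos : 0 < σr := by
    rw [hσr]
    refine ENNReal.toReal_pos ?_ (measure_ne_top _ _)
    rw [hσuniv]
    refine mul_ne_zero ?_ ?_
    · simp; omega
    · exact (Metric.measure_ball_pos _ _ one_pos).ne'
  set F : ℝ → ℝ≥0∞ := fun s =>
    ENNReal.ofReal
      ((∫ θ : Metric.sphere (0 : EuclideanSpace ℝ (Fin d)) 1,
          Real.exp (-W (s • (θ : EuclideanSpace ℝ (Fin d)))) ∂σ)⁻¹ * s ^ (-(d : ℝ) + 1)) with hF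
  set K : ℝ := σr⁻¹ * Real.exp (-c) with hK
  have hKpos : 0 < K := mul_pos (inv_pos.2 hσpos) (Real.exp_pos _)
  set ε : ℝ≥0∞ := ENNReal.ofReal (K * (1 - r⁻¹)) with hε
  have hεpos : 0 < ε := by
    rw [hε]
    apply ENNReal.ofReal_pos.2
    have : r⁻¹ < 1 := inv_lt_one_of_one_lt₀ hr
    exact mul_pos hKpos (by linarith)
  set Q : ℕ → Prop := fun n => ∀ x ∈ D n, (n : ℝ) * ((d : ℝ) - 2) * Real.log r - c ≤ W x with hQ
  have hinf' : ∀ N : ℕ, ∃ n, N ≤ n ∧ Q n := by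
    intro N; obtain ⟨n, hn, h⟩ := hinf N; exact ⟨n, hn, h⟩
  -- key estimate on each good annulus
  have key : ∀ n : ℕ, 1 ≤ n → Q n →
      ε ≤ ∫⁻ s in Ioo (r ^ ((n : ℝ) - 1)) (r ^ (n : ℝ)), F s := by
    intro n hn1 hWn
    set a : ℝ := r ^ ((n : ℝ) - 1) with ha
    set b : ℝ := r ^ ((n : ℝ)) with hb
    have hapos : 0 < a := rpow_pos_of_pos hrpos _
    have hab : a < b := by
      rw [ha, hb]
      exact rpow_lt_rpow_of_exponent_lt hr (by linarith)
    obtain ⟨C, hC⟩ := hWloc b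
    set an : ℝ := (n : ℝ) * ((d : ℝ) - 2) * Real.log r - c with han
    -- pointwise bound on the integrand
    have hpt : ∀ s ∈ Ioo a b, ENNReal.ofReal (K * r ^ (-(n : ℝ))) ≤ F s := by
      intro s hs
      have hspos : 0 < s := lt_trans hapos hs.1
      have hnorm : ∀ θ : Metric.sphere (0 : EuclideanSpace ℝ (Fin d)) 1, ‖s • (θ : EuclideanSpace ℝ (Fin d))‖ = s := by
        intro θ
        have hθ : ‖(θ : EuclideanSpace ℝ (Fin d))‖ = 1 := by
          have := θ.2
          rwa [mem_sphere_zero_iff_norm] at this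
        rw [norm_smul, hθ, mul_one, Real.norm_eq_abs, abs_of_pos hspos]
      have hmemD : ∀ θ : Metric.sphere (0 : EuclideanSpace ℝ (Fin d)) 1, s • (θ : EuclideanSpace ℝ (Fin d)) ∈ D n := by
        intro θ
        rw [hD n]
        exact ⟨by rw [hnorm]; exact hs.1.le, by rw [hnorm]; exact hs.2⟩
      have hWb : ∀ θ : Metric.sphere (0 : EuclideanSpace ℝ (Fin d)) 1, an ≤ W (s • (θ : EuclideanSpace ℝ (Fin d))) :=
        fun θ => hWn _ (hmemD θ)
      have hWC : ∀ θ : Metric.sphere (0 : EuclideanSpace ℝ (Fin d)) 1, |W (s • (θ : EuclideanSpace ℝ (Fin d)))| ≤ C := by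
        intro θ
        exact hC _ (by rw [hnorm]; exact hs.2.le)
      set g : Metric.sphere (0 : EuclideanSpace ℝ (Fin d)) 1 → ℝ := fun θ => Real.exp (-W (s • (θ : EuclideanSpace ℝ (Fin d)))) with hg
      have hmeasg : Measurable g := by
        apply Real.measurable_exp.comp
        apply Measurable.neg
        exact hWmeas.comp ((continuous_const_smul s).comp continuous_subtype_val).measurable
      have hintg : Integrable g σ := by
        refine ⟨hmeasg.aestronglyMeasurable, ?_⟩
        apply HasFiniteIntegral.mono' (g := fun _ => Real.exp C)
          (hasFiniteIntegral_const _)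
        filter_upwards with θ
        rw [Real.norm_eq_abs, abs_of_pos (Real.exp_pos _)]
        apply Real.exp_le_exp.2
        have := hWC θ
        rw [abs_le] at this
        linarith [this.1]
      set I : ℝ := ∫ θ, g θ ∂σ with hI
      have hIle : I ≤ σr * Real.exp (-an) := by
        have := integral_mono hintg (integrable_const (Real.exp (-an)))
          (fun θ => Real.exp_le_exp.2 (neg_le_neg (hWb θ)))
        rwa [integral_const, smul_eq_mul] at this
      have hIpos : 0 < I := by
        have h1 : σr * Real.exp (-C) ≤ I := by
          have := integral_mono (integrable_const (Real.exp (-C))) hintg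
            (fun θ => Real.exp_le_exp.2 (by
              have := hWC θ; rw [abs_le] at this; linarith [this.2]))
          rwa [integral_const, smul_eq_mul] at this
        exact lt_of_lt_of_le (mul_pos hσpos (Real.exp_pos _)) h1
      have hinv : (σr * Real.exp (-an))⁻¹ ≤ I⁻¹ :=
        inv_anti₀ hIpos hIle
      have hrpow : b ^ (-(d : ℝ) + 1) ≤ s ^ (-(d : ℝ) + 1) := by
        apply rpow_le_rpow_of_nonpos hspos hs.2.le
        have : (3 : ℝ) ≤ (d : ℝ) := by exact_mod_cast hd
        linarith
      have e1 : Real.exp an = r ^ ((n : ℝ) * ((d : ℝ) - 2)) * Real.exp (-c) := by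
        rw [han, Real.exp_sub, rpow_def_of_pos hrpos, mul_comm (Real.log r),
          div_eq_mul_inv, ← Real.exp_neg]
      have e2 : b ^ (-(d : ℝ) + 1) = r ^ ((n : ℝ) * (-(d : ℝ) + 1)) := by
        rw [hb, ← rpow_mul hrpos.le]
      have e3 : r ^ ((n : ℝ) * ((d : ℝ) - 2)) * r ^ ((n : ℝ) * (-(d : ℝ) + 1))
          = r ^ (-(n : ℝ)) := by
        rw [← rpow_add hrpos]
        congr 1
        ring
      have hEq : (σr * Real.exp (-an))⁻¹ * b ^ (-(d : ℝ) + 1)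
          = K * r ^ (-(n : ℝ)) := by
        rw [mul_inv, ← Real.exp_neg, neg_neg, e1, e2, hK,
          show σr⁻¹ * (r ^ ((n : ℝ) * ((d : ℝ) - 2)) * Real.exp (-c))
              * r ^ ((n : ℝ) * (-(d : ℝ) + 1))
            = σr⁻¹ * Real.exp (-c)
              * (r ^ ((n : ℝ) * ((d : ℝ) - 2)) * r ^ ((n : ℝ) * (-(d : ℝ) + 1))) from by ring,
          e3, mul_assoc]
      calc ENNReal.ofReal (K * r ^ (-(n : ℝ)))
          = ENNReal.ofReal ((σr * Real.exp (-an))⁻¹ * b ^ (-(d : ℝ) + 1)) := by rw [hEq]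
        _ ≤ F s := by
            apply ENNReal.ofReal_le_ofReal
            exact mul_le_mul hinv hrpow (rpow_pos_of_pos (lt_trans hapos hab) _).le
              (inv_nonneg.2 hIpos.le)
    -- integrate the constant lower bound
    have hsub : ENNReal.ofReal (K * r ^ (-(n : ℝ))) * volume (Ioo a b)
        ≤ ∫⁻ s in Ioo a b, F s := by
      rw [← setLIntegral_const]
      exact setLIntegral_mono' measurableSet_Ioo hpt
    have hvol : volume (Ioo a b) = ENNReal.ofReal (b - a) := Real.volume_Ioo
    have hcomp : K * r ^ (-(n : ℝ)) * (b - a) = K * (1 - r⁻¹) := by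
      have h1 : r ^ (-(n : ℝ)) * (b - a) = 1 - r⁻¹ := by
        rw [hb, ha, mul_sub, ← rpow_add hrpos, ← rpow_add hrpos,
          show -(n : ℝ) + (n : ℝ) = 0 from by ring,
          show -(n : ℝ) + ((n : ℝ) - 1) = -1 from by ring, rpow_zero, rpow_neg_one]
      rw [mul_assoc, h1]
    calc ε = ENNReal.ofReal (K * r ^ (-(n : ℝ)) * (b - a)) := by rw [hε, hcomp]
      _ = ENNReal.ofReal (K * r ^ (-(n : ℝ))) * volume (Ioo a b) := by
          rw [hvol, ENNReal.ofReal_mul (by positivity)]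
      _ ≤ _ := hsub
  -- build a strictly increasing sequence of good annuli
  obtain ⟨f, hfmono, hfgood⟩ := aux_seq hinf'
  set S : ℕ → Set ℝ := fun k => Ioo (r ^ ((f k : ℝ) - 1)) (r ^ ((f k : ℕ) : ℝ)) with hS
  have hSmeas : ∀ k, MeasurableSet (S k) := fun k => measurableSet_Ioo
  have hSdisj : Pairwise (Function.onFun Disjoint S) := by
    rw [pairwise_disjoint_on]
    intro j k hjk
    rw [Set.disjoint_left]
    intro x hxj hxk
    have h1 : f j + 1 ≤ f k := hfmono hjk
    have h2 : r ^ ((f j : ℝ)) ≤ r ^ ((f k : ℝ) - 1) := by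
      apply rpow_le_rpow_of_exponent_le hr.le
      have : ((f j : ℝ)) + 1 ≤ (f k : ℝ) := by exact_mod_cast h1
      linarith
    exact absurd (lt_of_lt_of_le hxj.2 (le_trans h2 hxk.1.le)) (not_lt.2 le_rfl)
  have hSsub : (⋃ k, S k) ⊆ Ioi (1 : ℝ) := by
    intro x hx
    obtain ⟨k, hk⟩ := Set.mem_iUnion.1 hx
    have h1 : (1 : ℝ) ≤ r ^ ((f k : ℝ) - 1) := by
      have h0 : (1 : ℝ) ≤ ((f k : ℕ) : ℝ) := by exact_mod_cast (hfgood k).1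
      calc (1 : ℝ) = r ^ (0 : ℝ) := (rpow_zero r).symm
        _ ≤ r ^ ((f k : ℝ) - 1) := rpow_le_rpow_of_exponent_le hr.le (by linarith)
    exact lt_of_le_of_lt h1 hk.1
  rw [← top_le_iff]
  calc (⊤ : ℝ≥0∞) = ∑' _ : ℕ, ε := (ENNReal.tsum_const_eq_top_of_ne_zero hεpos.ne').symm
    _ ≤ ∑' k, ∫⁻ s in S k, F s :=
        ENNReal.tsum_le_tsum (fun k => key (f k) (hfgood k).1 (hfgood k).2)
    _ = ∫⁻ s in ⋃ k, S k, F s := (lintegral_iUnion hSmeas hSdisj F).symm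
    _ ≤ ∫⁻ s in Ioi (1 : ℝ), F s := lintegral_mono_set hSsub
end

section
/- For 1/2 < H < 1, ∫_{−π}^{π} K(e_1, v_θ) dθ > 0, where K(e_1, v_θ) = (1/2)(2 − (2 − 2 cos θ)^H), e_1 = (1,0) and v_θ = (cos θ, sin θ). -/
open Real intervalIntegral

lemma aux_pointwise (H : ℝ) (hH0 : 0 < H) (hH2 : H < 1) (c : ℝ) (hc : -1 ≤ c) (hc' : c ≤ 1) :
    (2 - 2 * c) ^ H + (2 + 2 * c) ^ H ≤ 2 * 2 ^ H := by
  have hconc := Real.concaveOn_rpow hH0.le hH2.le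
  have ha : (2 - 2 * c : ℝ) ∈ Set.Ici (0:ℝ) := by simp [Set.mem_Ici]; linarith
  have hb : (2 + 2 * c : ℝ) ∈ Set.Ici (0:ℝ) := by simp [Set.mem_Ici]; linarith
  have h := hconc.2 ha hb (by norm_num : (0:ℝ) ≤ 1/2) (by norm_num : (0:ℝ) ≤ 1/2) (by norm_num)
  simp only [smul_eq_mul] at h
  have : (1/2 : ℝ) * (2 - 2*c) + 1/2 * (2 + 2*c) = 2 := by ring
  rw [this] at h
  linarith

/-- Positivity of the circle average of the fractional Brownian covariance for
`1/2 < H < 1`: `∫_{−π}^{π} (2 − (2 − 2cos θ)^H)/2 dθ > 0`. -/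
theorem stmt_12 (H : ℝ) (hH1 : 1 / 2 < H) (hH2 : H < 1) :
    0 < ∫ θ in (-π)..π, (2 - (2 - 2 * Real.cos θ) ^ H) / 2 := by
  have hH0 : 0 < H := by linarith
  set f : ℝ → ℝ := fun θ => (2 - (2 - 2 * Real.cos θ) ^ H) / 2 with hf
  have hfc : Continuous f := by
    have h1 : Continuous fun x : ℝ => (2 - 2 * Real.cos x) ^ H := by
      apply Continuous.comp (g := fun x : ℝ => x ^ H)
      · rw [continuous_iff_continuousAt]
        intro x
        exact Real.continuousAt_rpow_const x H (Or.inr hH0.le)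
      · continuity
    exact (continuous_const.sub h1).div_const 2
  have hint : ∀ a b : ℝ, IntervalIntegrable f MeasureTheory.volume a b :=
    fun a b => hfc.intervalIntegrable a b
  have heven : ∀ x, f (-x) = f x := by intro x; simp [hf]
  have hB : (∫ θ in (-π)..(0:ℝ), f θ) = ∫ θ in (0:ℝ)..π, f θ := by
    have := intervalIntegral.integral_comp_neg (a := (0:ℝ)) (b := π) f
    rw [neg_zero] at this
    rw [← this]
    simp only [heven]
  have hD : (∫ θ in (π/2)..π, f θ) = ∫ θ in (0:ℝ)..(π/2), f (π - θ) := by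
    have := intervalIntegral.integral_comp_sub_left (a := (0:ℝ)) (b := π/2) f π
    rw [sub_zero] at this
    have hpp : π - π/2 = π/2 := by ring
    rw [hpp] at this
    exact this.symm
  have hsplit1 : (∫ θ in (-π)..π, f θ) = (∫ θ in (-π)..(0:ℝ), f θ) + ∫ θ in (0:ℝ)..π, f θ :=
    (intervalIntegral.integral_add_adjacent_intervals (hint _ _) (hint _ _)).symm
  have hsplit2 : (∫ θ in (0:ℝ)..π, f θ) = (∫ θ in (0:ℝ)..(π/2), f θ) + ∫ θ in (π/2)..π, f θ :=
    (intervalIntegral.integral_add_adjacent_intervals (hint _ _) (hint _ _)).symm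
  have hintc : IntervalIntegrable (fun θ => f (π - θ)) MeasureTheory.volume 0 (π/2) :=
    ((hfc.comp (continuous_const.sub continuous_id)).intervalIntegrable _ _)
  have hadd : (∫ θ in (0:ℝ)..(π/2), f θ) + (∫ θ in (0:ℝ)..(π/2), f (π - θ))
      = ∫ θ in (0:ℝ)..(π/2), (f θ + f (π - θ)) :=
    (intervalIntegral.integral_add (hint _ _) hintc).symm
  have hpt : ∀ θ ∈ Set.Icc (0:ℝ) (π/2), 2 - 2 ^ H ≤ f θ + f (π - θ) := by
    intro θ _
    have hc := Real.neg_one_le_cos (x := θ)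
    have hc' := Real.cos_le_one θ
    have key := aux_pointwise H hH0 hH2 (Real.cos θ) hc hc'
    simp only [hf, Real.cos_pi_sub]
    have : 2 - 2 * -Real.cos θ = 2 + 2 * Real.cos θ := by ring
    rw [this]
    linarith
  have hmono : (∫ θ in (0:ℝ)..(π/2), (2 - 2 ^ H : ℝ)) ≤ ∫ θ in (0:ℝ)..(π/2), (f θ + f (π - θ)) := by
    apply intervalIntegral.integral_mono_on (by positivity) (intervalIntegrable_const)
      ((hint 0 (π/2)).add hintc) hpt
  have hconstval : (∫ θ in (0:ℝ)..(π/2), (2 - 2 ^ H : ℝ)) = (π/2) * (2 - 2 ^ H) := by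
    simp
    ring
  have hpos : 0 < (π/2) * (2 - 2 ^ H) := by
    have h2 : (2:ℝ) ^ H < 2 ^ (1:ℝ) := Real.rpow_lt_rpow_left_iff (by norm_num) |>.mpr hH2
    rw [Real.rpow_one] at h2
    have := Real.pi_pos
    nlinarith
  rw [hsplit1, hB, hsplit2, hD, hadd]
  calc (0:ℝ) < (π/2) * (2 - 2 ^ H) := hpos
    _ = (∫ θ in (0:ℝ)..(π/2), (2 - 2 ^ H : ℝ)) := hconstval.symm
    _ ≤ ∫ θ in (0:ℝ)..(π/2), (f θ + f (π - θ)) := hmono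
    _ ≤ _ := by linarith [hmono]
end
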